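/- Let T > 0 and 0 < a ≤ b, and let l(t,x) = λ(x² + t²(t−T)²). There exist constants C > 0 and λ₀ > 0, depending only on a, b, T, such that for all λ ≥ λ₀ and all (t,x) ∈ [0,T] × [a,b]: 2304 λ⁵ x⁴ − 768 λ⁴ x² + 192 λ³ x + 320 λ³ − 12 l_tt(t,x) l_x(t,x)² ≥ C λ⁵. -/

import Mathlib

/-!
Since `l_x = 2λx` and `l_tt = 2λ(T² − 6t(T − t)) ≤ 2λT²` for `t ∈ [0,T]`, on `[0,T] × [a,b]`
and for `λ ≥ 1` every term of `H₃` other than `2304 λ⁵ x⁴ ≥ 2304 a⁴ λ⁵` is nonnegative or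
bounded below by `−(768 + 96 T²) b² λ⁴`. Half of the leading term absorbs these once
`λ ≥ (768 + 96 T²) b² / (1152 a⁴)`, leaving `H₃ ≥ 1152 a⁴ λ⁵`.
-/

/-- Partial derivative in the time variable (first argument). -/
noncomputable def pt (y : ℝ → ℝ → ℝ) : ℝ → ℝ → ℝ := fun t x => deriv (fun s => y s x) t

/-- Partial derivative in the space variable (second argument). -/
noncomputable def px (y : ℝ → ℝ → ℝ) : ℝ → ℝ → ℝ := fun t x => deriv (fun z => y t z) x

/-- The Carleman weight exponent `l(t,x) = λ (x² + t² (t−T)²)`. -/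
noncomputable def lw (lam T : ℝ) : ℝ → ℝ → ℝ := fun t x => lam * (x^2 + t^2 * (t - T)^2)

noncomputable def l_t (lam T : ℝ) : ℝ → ℝ → ℝ := pt (lw lam T)
noncomputable def l_tt (lam T : ℝ) : ℝ → ℝ → ℝ := pt (pt (lw lam T))
noncomputable def l_x (lam T : ℝ) : ℝ → ℝ → ℝ := px (lw lam T)
noncomputable def l_xx (lam T : ℝ) : ℝ → ℝ → ℝ := px (px (lw lam T))

lemma l_x_eq (lam T t x : ℝ) : l_x lam T t x = 2 * lam * x := by
  have h := (((hasDerivAt_id' x).pow 2).add_const (t ^ 2 * (t - T) ^ 2)).const_mul lam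
  exact h.deriv.trans (by norm_num; ring)

lemma l_t_eq (lam T t x : ℝ) :
    l_t lam T t x = 2 * lam * (2 * t ^ 3 - 3 * T * t ^ 2 + T ^ 2 * t) := by
  have h := ((((hasDerivAt_id' t).pow 2).mul (((hasDerivAt_id' t).sub_const T).pow 2)).const_add
    (x ^ 2)).const_mul lam
  exact h.deriv.trans (by norm_num; ring)

lemma l_tt_eq (lam T t x : ℝ) :
    l_tt lam T t x = 2 * lam * (6 * t ^ 2 - 6 * T * t + T ^ 2) := by
  have h := (((((hasDerivAt_id' t).pow 3).const_mul 2).sub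
    (((hasDerivAt_id' t).pow 2).const_mul (3 * T))).add
    ((hasDerivAt_id' t).const_mul (T ^ 2))).const_mul (2 * lam)
  have hl_t : (fun s => l_t lam T s x) = fun s => 2 * lam * (2 * s ^ 3 - 3 * T * s ^ 2 + T ^ 2 * s) :=
    funext fun s => l_t_eq lam T s x
  change deriv (fun s => l_t lam T s x) t = _
  rw [hl_t]
  exact h.deriv.trans (by push_cast; ring)

lemma l_tt_le {lam T t : ℝ} (x : ℝ) (hlam : 0 ≤ lam) (ht : t ∈ Set.Icc 0 T) :
    l_tt lam T t x ≤ 2 * lam * T ^ 2 := by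
  have htT : 0 ≤ t * (T - t) := mul_nonneg ht.1 (sub_nonneg.2 ht.2)
  rw [l_tt_eq]
  gcongr
  linarith

noncomputable def H3 (lam T t x : ℝ) : ℝ :=
  2304 * lam^5 * x^4 - 768 * lam^4 * x^2 + 192 * lam^3 * x + 320 * lam^3
    - 12 * l_tt lam T t x * (l_x lam T t x)^2

lemma H3_ge {lam T t x a b : ℝ} (hlam : 1 ≤ lam) (ha : 0 < a) (ht : t ∈ Set.Icc 0 T)
    (hx : x ∈ Set.Icc a b) :
    2304 * a ^ 4 * lam ^ 5 - (768 + 96 * T ^ 2) * b ^ 2 * lam ^ 4 ≤ H3 lam T t x := by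
  obtain ⟨hax, hxb⟩ := hx
  have hx0 : 0 ≤ x := ha.le.trans hax
  have hlam3 : lam ^ 3 ≤ lam ^ 4 := pow_le_pow_right₀ hlam (by norm_num)
  have hleading : 2304 * a ^ 4 * lam ^ 5 ≤ 2304 * x ^ 4 * lam ^ 5 := by
    have : 0 ≤ lam := zero_le_one.trans hlam
    gcongr
  have hsecond : 768 * lam ^ 4 * x ^ 2 ≤ 768 * lam ^ 4 * b ^ 2 := by gcongr
  have hcross : 12 * l_tt lam T t x * (l_x lam T t x) ^ 2 ≤ 96 * T ^ 2 * b ^ 2 * lam ^ 4 := by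
    calc 12 * l_tt lam T t x * (l_x lam T t x) ^ 2
        ≤ 12 * (2 * lam * T ^ 2) * (2 * lam * x) ^ 2 := by
          rw [l_x_eq]; gcongr; exact l_tt_le x (by linarith) ht
      _ = 96 * T ^ 2 * x ^ 2 * lam ^ 3 := by ring
      _ ≤ 96 * T ^ 2 * b ^ 2 * lam ^ 4 := by gcongr
  have hrest : 0 ≤ 192 * lam ^ 3 * x + 320 * lam ^ 3 := by positivity
  unfold H3
  linarith

lemma mul_pow_le_mul_pow_succ {A K lam : ℝ} (n : ℕ) (hA : 0 < A) (hlam : 0 ≤ lam)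
    (h : K / A ≤ lam) : K * lam ^ n ≤ A * lam ^ (n + 1) :=
  calc K * lam ^ n ≤ lam * A * lam ^ n := by gcongr; exact (div_le_iff₀ hA).1 h
    _ = A * lam ^ (n + 1) := by ring

theorem coefficient_bound_H3_general (T a b : ℝ) (ha : 0 < a) :
    ∃ C > (0:ℝ), ∃ lam₀ > (0:ℝ), ∀ lam ≥ lam₀,
      ∀ t ∈ Set.Icc (0:ℝ) T, ∀ x ∈ Set.Icc a b,
        2304 * lam^5 * x^4 - 768 * lam^4 * x^2 + 192 * lam^3 * x + 320 * lam^3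
            - 12 * l_tt lam T t x * (l_x lam T t x)^2
          ≥ C * lam^5 := by
  set K := (768 + 96 * T ^ 2) * b ^ 2
  refine ⟨1152 * a ^ 4, by positivity, max 1 (K / (1152 * a ^ 4)), by positivity, ?_⟩
  intro lam hlam t ht x hx
  have hlam1 : 1 ≤ lam := le_of_max_le_left hlam
  have habsorb : K * lam ^ 4 ≤ 1152 * a ^ 4 * lam ^ 5 :=
    mul_pow_le_mul_pow_succ 4 (by positivity) (by linarith) (le_of_max_le_right hlam)
  show H3 lam T t x ≥ _
  linarith [H3_ge hlam1 ha ht hx]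

/-- The coefficient `H₃ = F₃ − 12 l_tt l_x²` of `(∂ₓu)²` in the Carleman
estimate is bounded below by `C λ⁵` on `[0,T] × [a,b]` for `λ` large. -/
theorem coefficient_bound_H3 (T a b : ℝ) (hT : 0 < T) (ha : 0 < a) (hab : a ≤ b) :
    ∃ C > (0:ℝ), ∃ lam₀ > (0:ℝ), ∀ lam ≥ lam₀,
      ∀ t ∈ Set.Icc (0:ℝ) T, ∀ x ∈ Set.Icc a b,
        2304 * lam^5 * x^4 - 768 * lam^4 * x^2 + 192 * lam^3 * x + 320 * lam^3
            - 12 * l_tt lam T t x * (l_x lam T t x)^2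
          ≥ C * lam^5 :=
  coefficient_bound_H3_general T a b ha
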